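/- arXiv:2210.04385 — 4 statements merged into one kernel-verified Lean document; each statement's English description precedes it below -/
import Mathlib

section
/- Let k ≥ 2 be an integer, n := 2^k, and for j ∈ ℤ set z_j := e^{i t_j} with t_j := 2πj/n. Then for every even integer j (j = 2u with u ∈ ℤ), the Rudin–Shapiro polynomials satisfy P_k(z_j) = 2·P_{k−2}(z_j). -/
open Polynomial

/-- The Rudin–Shapiro polynomial pair `(P_k, Q_k)`, defined recursively by
`P_0 = Q_0 = 1`, `P_{k+1} = P_k + X^{2^k} Q_k`, `Q_{k+1} = P_k - X^{2^k} Q_k`. -/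
noncomputable def RS : ℕ → Polynomial ℂ × Polynomial ℂ
  | 0 => (1, 1)
  | k + 1 => ((RS k).1 + X ^ (2 ^ k) * (RS k).2, (RS k).1 - X ^ (2 ^ k) * (RS k).2)

/-!
Unfolding the recursion twice gives
`P_{m+2} = (1 + X^{2^{m+1}}) P_m + (1 - X^{2^{m+1}}) X^{2^m} Q_m`.
For `k = m + 2` and `j = 2u`, the point `z_j = exp(2πiu / 2^{m+1})` is a `2^{m+1}`-th root of
unity, so the `Q_m` term vanishes and the `P_m` term doubles.
-/

theorem RS_add_two_fst (m : ℕ) :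
    (RS (m + 2)).1 =
      (1 + X ^ 2 ^ (m + 1)) * (RS m).1 + (1 - X ^ 2 ^ (m + 1)) * X ^ 2 ^ m * (RS m).2 := by
  simp only [RS, pow_succ]
  ring

theorem eval_RS_add_two_fst_of_pow_eq_one {m : ℕ} {w : ℂ} (hw : w ^ 2 ^ (m + 1) = 1) :
    (RS (m + 2)).1.eval w = 2 * (RS m).1.eval w := by
  simp only [RS_add_two_fst, eval_add, eval_mul, eval_sub, eval_pow, eval_one, eval_X, hw]
  ring

theorem exp_two_pi_I_int_div_pow_eq_one (u : ℤ) {n : ℕ} (hn : n ≠ 0) :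
    Complex.exp (Complex.I * ↑(2 * Real.pi * u / n)) ^ n = 1 := by
  rw [← Complex.exp_nat_mul]
  convert Complex.exp_int_mul_two_pi_mul_I u using 2
  push_cast
  field_simp

theorem rudin_shapiro_P_at_even_roots_of_unity (k : ℕ) (hk : 2 ≤ k) (j : ℤ) (hj : Even j)
    (z : ℂ) (hz : z = Complex.exp (Complex.I * (2 * Real.pi * j / (2 : ℝ) ^ k))) :
    ((RS k).1).eval z = 2 * ((RS (k - 2)).1).eval z := by
  obtain ⟨m, rfl⟩ : ∃ m, k = m + 2 := ⟨k - 2, by omega⟩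
  obtain ⟨u, rfl⟩ : ∃ u : ℤ, j = 2 * u := by
    obtain ⟨u, hu⟩ := hj
    exact ⟨u, by omega⟩
  have hz' : z = Complex.exp (Complex.I * ↑(2 * Real.pi * u / (2 ^ (m + 1) : ℕ))) := by
    rw [hz]
    congr 3
    push_cast
    ring
  apply eval_RS_add_two_fst_of_pow_eq_one
  rw [hz']
  exact exp_two_pi_I_int_div_pow_eq_one u (pow_ne_zero _ two_ne_zero)
end

section
/- Let k ≥ 2 be an integer, n := 2^k, and for j ∈ ℤ set z_j := e^{i t_j} with t_j := 2πj/n. Then for every odd integer j (j = 2u + 1 with u ∈ ℤ), the Rudin–Shapiro polynomials satisfy P_k(z_j) = (−1)^{(j−1)/2}·2i·Q_{k−2}(z_j), where i is the imaginary unit. -/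
open Polynomial

theorem rudin_shapiro_P_at_odd_roots_of_unity (k : ℕ) (hk : 2 ≤ k) (j : ℤ) (hj : Odd j)
    (z : ℂ) (hz : z = Complex.exp (Complex.I * (2 * Real.pi * j / (2 : ℝ) ^ k))) :
    ((RS k).1).eval z
      = (-1 : ℂ) ^ ((j - 1) / 2) * (2 * Complex.I) * ((RS (k - 2)).2).eval z := by
  obtain ⟨m, rfl⟩ : ∃ m, k = m + 2 := ⟨k - 2, by omega⟩
  obtain ⟨u, rfl⟩ := hj
  have hdiv : (2 * u + 1 - 1) / 2 = u := by omega
  rw [hdiv]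
  have hpow2 : ((2 : ℝ) ^ (m + 2) : ℂ) ≠ 0 := by
    norm_num
  have hm : z ^ (2 ^ m) = (-1 : ℂ) ^ u * Complex.I := by
    rw [hz, ← Complex.exp_nat_mul]
    have harg : (2 ^ m : ℕ) * (Complex.I * (2 * (Real.pi : ℂ) * ((2 * u + 1 : ℤ) : ℂ) / ((2 : ℝ) ^ (m + 2) : ℂ)))
        = (u : ℂ) * ((Real.pi : ℂ) * Complex.I) + (Real.pi : ℂ) / 2 * Complex.I := by
      have h4 : ((2 : ℝ) ^ (m + 2) : ℂ) = 4 * (2 : ℂ) ^ m := by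
        push_cast; ring
      rw [h4]
      have h2 : ((2 : ℂ) ^ m) ≠ 0 := by norm_num
      push_cast
      field_simp
      ring
    push_cast at harg ⊢
    rw [harg, Complex.exp_add, Complex.exp_int_mul, Complex.exp_pi_mul_I,
      Complex.exp_mul_I, Complex.cos_pi_div_two, Complex.sin_pi_div_two]
    ring
  have hm1 : z ^ (2 ^ (m + 1)) = -1 := by
    have : z ^ (2 ^ (m + 1)) = (z ^ (2 ^ m)) ^ 2 := by
      rw [← pow_mul, pow_succ]
    rw [this, hm]
    have : ((-1 : ℂ) ^ u) ^ 2 = 1 := by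
      rw [← zpow_natCast, ← zpow_mul]
      rw [mul_comm, zpow_mul]
      norm_num
    rw [mul_pow, this, Complex.I_sq, one_mul]
  rw [show m + 2 - 2 = m from rfl]
  simp only [RS, eval_add, eval_sub, eval_mul, eval_pow, eval_X, hm, hm1]
  ring
end

section
/- Let k ≥ 2 be an integer, n := 2^k, and for j ∈ ℤ set z_j := e^{2πij/n}. Then for every odd integer j, the Rudin–Shapiro polynomials satisfy |P_k(z_j)|² − n = n − 4·|P_{k−2}(z_j)|². -/
open Polynomial

/-! On the unit circle `|P_m|² + |Q_m|² = 2^{m+1}` by the parallelogram law. If moreover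
`z^{2^{m+1}} = -1` (as for an odd node of order `2^{m+2}`), then two steps of the recursion
collapse to `P_{m+2}(z) = 2 z^{2^m} Q_m(z)`, so `|P_{m+2}(z)|² = 4 |Q_m(z)|² = 2^{m+3} - 4 |P_m(z)|²`. -/

theorem RS_norm_sq_add_norm_sq {z : ℂ} (hz : ‖z‖ = 1) (m : ℕ) :
    ‖(RS m).1.eval z‖ ^ 2 + ‖(RS m).2.eval z‖ ^ 2 = 2 ^ (m + 1) := by
  induction m with
  | zero => norm_num [RS]
  | succ m ih =>
    simp only [RS, eval_add, eval_sub, eval_mul, eval_pow, eval_X]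
    rw [parallelogram_law_with_norm ℂ, norm_mul, mul_pow, norm_pow, hz, one_pow, one_pow,
      one_mul, ih, pow_succ 2 (m + 1), mul_comm]

theorem RS_fst_eval_eq_of_pow_eq_neg_one {z : ℂ} {m : ℕ} (hz : z ^ 2 ^ (m + 1) = -1) :
    (RS (m + 2)).1.eval z = 2 * (z ^ 2 ^ m * (RS m).2.eval z) := by
  have hsq : (z ^ 2 ^ m) ^ 2 = -1 := by rw [← pow_mul, ← pow_succ, hz]
  simp only [RS, eval_add, eval_sub, eval_mul, eval_pow, eval_X, pow_succ 2 m, pow_mul, hsq]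
  ring

theorem Complex.norm_eq_one_of_pow_eq_neg_one {z : ℂ} {n : ℕ} (h : z ^ n = -1) : ‖z‖ = 1 :=
  Complex.norm_eq_one_of_pow_eq_one (n := 2 * n) (by rw [pow_mul', h]; norm_num)
    (mul_ne_zero two_ne_zero (by rintro rfl; norm_num at h))

theorem exp_two_pi_odd_div_two_mul_pow_eq_neg_one {n : ℕ} (hn : n ≠ 0) {j : ℤ} (hj : Odd j) :
    Complex.exp (Complex.I * (2 * Real.pi * j / (2 * n))) ^ n = -1 := by
  have harg : n * (Complex.I * (2 * Real.pi * j / (2 * n))) = j * (Real.pi * Complex.I) := by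
    field_simp
  rw [← Complex.exp_nat_mul, harg, Complex.exp_int_mul, Complex.exp_pi_mul_I,
    hj.neg_one_zpow]

theorem rudin_shapiro_P_odd_node_reflection (k : ℕ) (hk : 2 ≤ k) (j : ℤ) (hj : Odd j)
    (z : ℂ) (hz : z = Complex.exp (Complex.I * (2 * Real.pi * j / (2 : ℝ) ^ k))) :
    ‖((RS k).1).eval z‖^2 - (2 : ℝ)^k
      = (2 : ℝ)^k - 4 * ‖((RS (k - 2)).1).eval z‖^2 := by
  obtain ⟨m, rfl⟩ : ∃ m, k = m + 2 := ⟨k - 2, by omega⟩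
  have hneg : z ^ 2 ^ (m + 1) = -1 := by
    rw [hz]
    convert exp_two_pi_odd_div_two_mul_pow_eq_neg_one (pow_ne_zero (m + 1) two_ne_zero) hj
      using 5
    push_cast
    ring
  have hsum := RS_norm_sq_add_norm_sq (Complex.norm_eq_one_of_pow_eq_neg_one hneg) m
  rw [Nat.add_sub_cancel, RS_fst_eval_eq_of_pow_eq_neg_one hneg, norm_mul, norm_mul, norm_pow,
    Complex.norm_eq_one_of_pow_eq_neg_one hneg, Complex.norm_two, one_pow, one_mul]
  linear_combination 4 * hsum
end

section
/- Let k ≥ 2 be an integer, n := 2^k, and for j ∈ ℤ set z_j := e^{2πij/n}. Then for every integer j, the Rudin–Shapiro polynomials satisfy (4·|P_{k−2}(z_j)|² − n)·(4·|P_{k−2}(z_{j+1})|² − n) = −(|P_k(z_j)|² − n)·(|P_k(z_{j+1})|² − n). -/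
open Polynomial

/-!
On the unit circle the parallelogram law gives `|P_k|² + |Q_k|² = 2^(k+1)`. Unfolding the
recursion twice, `P_{m+2}(z) = (P_m + w Q_m) + w² (P_m - w Q_m)` with `w = z^(2^m)`. At an
`n`-th root of unity `z_j` (`n = 2^(m+2)`) we have `w² = (-1)^j`, so `P_{m+2}(z_j)` is `2 P_m(z_j)`
for even `j` and `2 w Q_m(z_j)` for odd `j`. Hence `|P_{m+2}(z_j)|² - n = ±(4 |P_m(z_j)|² - n)`
with signs alternating in `j`, which gives the product identity for consecutive nodes.
-/

lemma RS_succ_fst_eval (k : ℕ) (z : ℂ) :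
    (RS (k + 1)).1.eval z = (RS k).1.eval z + z ^ 2 ^ k * (RS k).2.eval z := by
  simp [RS]

lemma RS_succ_snd_eval (k : ℕ) (z : ℂ) :
    (RS (k + 1)).2.eval z = (RS k).1.eval z - z ^ 2 ^ k * (RS k).2.eval z := by
  simp [RS]

lemma norm_sq_RS_fst_eval_add_norm_sq_RS_snd_eval (k : ℕ) {z : ℂ} (hz : ‖z‖ = 1) :
    ‖(RS k).1.eval z‖ ^ 2 + ‖(RS k).2.eval z‖ ^ 2 = 2 ^ (k + 1) := by
  induction k with
  | zero => norm_num [RS]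
  | succ k ih =>
    rw [RS_succ_fst_eval, RS_succ_snd_eval, parallelogram_law_with_norm ℂ, norm_mul, norm_pow,
      hz, one_pow, one_mul, ih, pow_succ _ (k + 1), mul_comm]

lemma RS_fst_eval_add_two (m : ℕ) (z : ℂ) :
    (RS (m + 2)).1.eval z = (RS m).1.eval z + z ^ 2 ^ m * (RS m).2.eval z
      + z ^ 2 ^ (m + 1) * ((RS m).1.eval z - z ^ 2 ^ m * (RS m).2.eval z) := by
  rw [RS_succ_fst_eval, RS_succ_fst_eval, RS_succ_snd_eval]

lemma norm_sq_RS_fst_eval_add_two_of_pow_eq_one {m : ℕ} {z : ℂ} (hz : z ^ 2 ^ (m + 1) = 1) :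
    ‖(RS (m + 2)).1.eval z‖ ^ 2 = 4 * ‖(RS m).1.eval z‖ ^ 2 := by
  rw [RS_fst_eval_add_two, hz, one_mul, add_add_sub_cancel, ← two_mul, norm_mul, Complex.norm_two]
  ring

lemma norm_sq_RS_fst_eval_add_two_of_pow_eq_neg_one {m : ℕ} {z : ℂ} (hz : z ^ 2 ^ (m + 1) = -1) :
    ‖(RS (m + 2)).1.eval z‖ ^ 2 = 2 ^ (m + 3) - 4 * ‖(RS m).1.eval z‖ ^ 2 := by
  have hz1 : ‖z‖ = 1 := by
    have : ‖z‖ ^ 2 ^ (m + 1) = 1 := by rw [← norm_pow, hz, norm_neg, norm_one]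
    exact (pow_eq_one_iff_of_nonneg (norm_nonneg z) (by positivity)).mp this
  have hsum := norm_sq_RS_fst_eval_add_norm_sq_RS_snd_eval m hz1
  rw [RS_fst_eval_add_two, hz, neg_one_mul, ← sub_eq_add_neg, add_sub_sub_cancel, ← two_mul,
    norm_mul, norm_mul, norm_pow, hz1, one_pow, one_mul, Complex.norm_two]
  linear_combination 4 * hsum

lemma cexp_two_pi_I_div_pow_two_pow (m : ℕ) (l : ℤ) :
    Complex.exp (Complex.I * (2 * Real.pi * l / (2 : ℝ) ^ (m + 2))) ^ 2 ^ (m + 1)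
      = (-1) ^ l := by
  rw [← Complex.exp_nat_mul, ← Complex.exp_pi_mul_I, ← Complex.exp_int_mul]
  congr 1
  push_cast
  field_simp
  ring

theorem rudin_shapiro_consecutive_nodes_product (k : ℕ) (hk : 2 ≤ k) (j : ℤ)
    (z : ℤ → ℂ) (hz : ∀ l : ℤ, z l = Complex.exp (Complex.I * (2 * Real.pi * l / (2 : ℝ) ^ k))) :
    (4 * (‖((RS (k - 2)).1).eval (z j)‖)^2 - (2 : ℝ)^k)
        * (4 * (‖((RS (k - 2)).1).eval (z (j + 1))‖)^2 - (2 : ℝ)^k)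
      = -(((‖((RS k).1).eval (z j)‖)^2 - (2 : ℝ)^k)
        * ((‖((RS k).1).eval (z (j + 1))‖)^2 - (2 : ℝ)^k)) := by
  obtain ⟨m, rfl⟩ : ∃ m, k = m + 2 := ⟨k - 2, by omega⟩
  have hnode (l : ℤ) : z l ^ 2 ^ (m + 1) = (-1) ^ l := by
    rw [hz, cexp_two_pi_I_div_pow_two_pow]
  rw [Nat.add_sub_cancel]
  rcases Int.even_or_odd j with hj | hj
  · rw [norm_sq_RS_fst_eval_add_two_of_pow_eq_one (by rw [hnode, hj.neg_one_zpow]),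
      norm_sq_RS_fst_eval_add_two_of_pow_eq_neg_one (by rw [hnode, hj.add_one.neg_one_zpow])]
    ring
  · rw [norm_sq_RS_fst_eval_add_two_of_pow_eq_neg_one (by rw [hnode, hj.neg_one_zpow]),
      norm_sq_RS_fst_eval_add_two_of_pow_eq_one (by rw [hnode, hj.add_one.neg_one_zpow])]
    ring
end
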